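/- Given an integrable density f: [0,1] → [0,1] with v(D) = ∫_D f, a district D ⊆ [0,1], and a real s > 0, there exist districts D₁, …, D_{⌊1/s⌋} such that each D_k ⊆ D, μ(D_{k₁} ∩ D_{k₂}) = 0 for k₁ ≠ k₂, μ(D_k) = s·μ(D) for all k, and v(D_k) = s·v(D) for all k. -/

import Mathlib

open MeasureTheory Set

noncomputable section

/-- A district is a finite union of closed intervals contained in `[0,1]`. -/
def IsDistrict (D : Set ℝ) : Prop :=
  D ⊆ Icc 0 1 ∧ ∃ s : Finset (ℝ × ℝ), D = ⋃ p ∈ s, Icc p.1 p.2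

/-- Lebesgue measure of a set, as a real number. -/
def mu (D : Set ℝ) : ℝ := (volume D).toReal

/-- The voter mass of `D` with respect to density `f`. -/
def vmass (f : ℝ → ℝ) (D : Set ℝ) : ℝ := ∫ x in D, f x

lemma isDistrict_empty : IsDistrict (∅ : Set ℝ) :=
  ⟨empty_subset _, ⟨∅, by simp⟩⟩

lemma IsDistrict.measurableSet {D : Set ℝ} (hD : IsDistrict D) : MeasurableSet D := by
  obtain ⟨-, s, rfl⟩ := hD
  exact s.measurableSet_biUnion fun p _ => measurableSet_Icc

lemma IsDistrict.inter_Icc {D : Set ℝ} (hD : IsDistrict D) (x y : ℝ) :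
    IsDistrict (D ∩ Icc x y) := by
  obtain ⟨hsub, s, rfl⟩ := hD
  refine ⟨inter_subset_left.trans hsub, s.image (fun p => (p.1 ⊔ x, p.2 ⊓ y)), ?_⟩
  have : (⋃ p ∈ s, Icc p.1 p.2) ∩ Icc x y = ⋃ p ∈ s, (Icc p.1 p.2 ∩ Icc x y) := by
    simp [iUnion_inter]
  rw [this]
  ext z
  simp only [mem_iUnion, Finset.mem_image, exists_prop]
  constructor
  · rintro ⟨p, hp, hz⟩
    exact ⟨(p.1 ⊔ x, p.2 ⊓ y), ⟨p, hp, rfl⟩, by simpa [Icc_inter_Icc] using hz⟩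
  · rintro ⟨q, ⟨p, hp, rfl⟩, hz⟩
    exact ⟨p, hp, by simpa [Icc_inter_Icc] using hz⟩

lemma IsDistrict.union {A B : Set ℝ} (hA : IsDistrict A) (hB : IsDistrict B) :
    IsDistrict (A ∪ B) := by
  obtain ⟨hA1, sa, rfl⟩ := hA
  obtain ⟨hB1, sb, rfl⟩ := hB
  exact ⟨union_subset hA1 hB1, sa ∪ sb, (Finset.set_biUnion_union sa sb _).symm⟩

lemma vol_ne_top {A : Set ℝ} (hA : A ⊆ Icc 0 1) : volume A ≠ ⊤ :=
  ((measure_mono hA).trans_lt measure_Icc_lt_top).ne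

lemma mu_nonneg (A : Set ℝ) : 0 ≤ mu A := ENNReal.toReal_nonneg

lemma mu_null {A B : Set ℝ} (h : A ⊆ B) (hB : volume B = 0) : mu A = 0 := by
  simp [mu, measure_mono_null h hB]

variable {f : ℝ → ℝ}

def Mfun (E : Set ℝ) (x : ℝ) : ℝ := mu (E ∩ Iic x)

def Vfun (f : ℝ → ℝ) (E : Set ℝ) (x : ℝ) : ℝ := vmass f (E ∩ Iic x)

lemma integrableOn_of_range (hmeas : Measurable f)
    (hrange : ∀ x ∈ Icc (0:ℝ) 1, f x ∈ Icc (0:ℝ) 1)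
    {A : Set ℝ} (hA : A ⊆ Icc 0 1) (hAm : MeasurableSet A) : IntegrableOn f A := by
  refine Measure.integrableOn_of_bounded (M := 1) (vol_ne_top hA)
    hmeas.aestronglyMeasurable ?_
  refine (ae_restrict_iff' hAm).2 (Filter.Eventually.of_forall fun x hx => ?_)
  have := hrange x (hA hx)
  rw [Real.norm_eq_abs, abs_le]
  exact ⟨by linarith [this.1], this.2⟩

section MV

variable {E : Set ℝ} (hEsub : E ⊆ Icc 0 1) (hEm : MeasurableSet E)
  (hmeas : Measurable f) (hrange : ∀ x ∈ Icc (0:ℝ) 1, f x ∈ Icc (0:ℝ) 1)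

include hEsub hEm

lemma Mfun_diff {x y : ℝ} (hxy : x ≤ y) :
    Mfun E y - Mfun E x = mu (E ∩ Ioc x y) := by
  have hu : (E ∩ Iic x) ∪ (E ∩ Ioc x y) = E ∩ Iic y := by
    rw [← inter_union_distrib_left, Iic_union_Ioc_eq_Iic hxy]
  have hd : Disjoint (E ∩ Iic x) (E ∩ Ioc x y) :=
    (Iic_disjoint_Ioc le_rfl).mono inter_subset_right inter_subset_right
  have h2 := measure_union (μ := volume) hd (hEm.inter measurableSet_Ioc)
  rw [hu] at h2
  simp only [Mfun, mu]
  rw [h2, ENNReal.toReal_add (vol_ne_top (inter_subset_left.trans hEsub))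
    (vol_ne_top (inter_subset_left.trans hEsub))]
  ring

lemma Mfun_lip {x y : ℝ} (hxy : x ≤ y) :
    0 ≤ Mfun E y - Mfun E x ∧ Mfun E y - Mfun E x ≤ y - x := by
  rw [Mfun_diff hEsub hEm hxy]
  constructor
  · exact ENNReal.toReal_nonneg
  · have h1 : volume (E ∩ Ioc x y) ≤ volume (Ioc x y) := measure_mono inter_subset_right
    have h2 : (volume (E ∩ Ioc x y)).toReal ≤ (volume (Ioc x y)).toReal :=
      ENNReal.toReal_mono (by simp [Real.volume_Ioc]) h1
    simpa [mu, Real.volume_Ioc, ENNReal.toReal_ofReal (sub_nonneg.2 hxy)] using h2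

include hmeas hrange

lemma Vfun_diff {x y : ℝ} (hxy : x ≤ y) :
    Vfun f E y - Vfun f E x = vmass f (E ∩ Ioc x y) := by
  have hu : (E ∩ Iic x) ∪ (E ∩ Ioc x y) = E ∩ Iic y := by
    rw [← inter_union_distrib_left, Iic_union_Ioc_eq_Iic hxy]
  have hd : Disjoint (E ∩ Iic x) (E ∩ Ioc x y) :=
    (Iic_disjoint_Ioc le_rfl).mono inter_subset_right inter_subset_right
  have h2 := setIntegral_union (μ := volume) (f := f) hd (hEm.inter measurableSet_Ioc)
    (integrableOn_of_range hmeas hrange (inter_subset_left.trans hEsub)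
      (hEm.inter measurableSet_Iic))
    (integrableOn_of_range hmeas hrange (inter_subset_left.trans hEsub)
      (hEm.inter measurableSet_Ioc))
  simp only [Vfun, vmass]
  rw [← hu, h2]
  ring

omit hEsub hEm in
lemma vmass_between {A : Set ℝ} (hA : A ⊆ Icc 0 1) (hAm : MeasurableSet A) :
    0 ≤ vmass f A ∧ vmass f A ≤ mu A := by
  constructor
  · exact setIntegral_nonneg hAm fun z hz => (hrange z (hA hz)).1
  · have h1 : vmass f A ≤ ∫ _ in A, (1:ℝ) := by
      refine setIntegral_mono_on
        (integrableOn_of_range hmeas hrange hA hAm)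
        (integrableOn_const (vol_ne_top hA)) hAm
        (fun z hz => (hrange z (hA hz)).2)
    exact (by simpa [setIntegral_const] using h1 : vmass f A ≤ volume.real A)

lemma Vfun_between {x y : ℝ} (hxy : x ≤ y) :
    0 ≤ Vfun f E y - Vfun f E x ∧
      Vfun f E y - Vfun f E x ≤ Mfun E y - Mfun E x := by
  rw [Vfun_diff hEsub hEm hmeas hrange hxy, Mfun_diff hEsub hEm hxy]
  exact vmass_between (f := f) hmeas hrange (inter_subset_left.trans hEsub)
    (hEm.inter measurableSet_Ioc)

end MV

/-- Clamp to `[0, mu E]`. -/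
def clamp (m u : ℝ) : ℝ := max 0 (min u m)

lemma clamp_mem {m : ℝ} (hm : 0 ≤ m) (u : ℝ) : clamp m u ∈ Icc 0 m :=
  ⟨le_max_left _ _, max_le hm (min_le_right _ _)⟩

lemma clamp_mono {m : ℝ} : Monotone (clamp m) :=
  fun u v huv => max_le_max le_rfl (min_le_min_right _ huv)

lemma clamp_lip {m u v : ℝ} (huv : u ≤ v) : clamp m v - clamp m u ≤ v - u := by
  rcases le_total u m with h | h <;> rcases le_total v m with h' | h' <;>
    simp [clamp, min_def, max_def] <;> split_ifs <;> linarith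

lemma clamp_of_mem {m u : ℝ} (hu : u ∈ Icc 0 m) : clamp m u = u := by
  rw [clamp, min_eq_left hu.2, max_eq_right hu.1]


section T

variable {E : Set ℝ} (hEsub : E ⊆ Icc 0 1) (hEm : MeasurableSet E)
  (hmeas : Measurable f) (hrange : ∀ x ∈ Icc (0:ℝ) 1, f x ∈ Icc (0:ℝ) 1)

include hEsub

lemma Mfun_zero : Mfun E 0 = 0 := by
  have : E ∩ Iic 0 ⊆ {0} := fun z hz => le_antisymm hz.2 (hEsub hz.1).1
  exact mu_null this (by simp)

lemma Mfun_one : Mfun E 1 = mu E := by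
  have : E ∩ Iic 1 = E := inter_eq_left.2 fun z hz => (hEsub hz).2
  rw [Mfun, this]

lemma Vfun_one : Vfun f E 1 = vmass f E := by
  have : E ∩ Iic 1 = E := inter_eq_left.2 fun z hz => (hEsub hz).2
  rw [Vfun, this]

include hEm

lemma Mfun_continuous : Continuous (Mfun E) := by
  have : LipschitzWith 1 (Mfun E) := by
    refine LipschitzWith.of_dist_le_mul fun x y => ?_
    rw [Real.dist_eq, Real.dist_eq, NNReal.coe_one, one_mul]
    rcases le_total x y with h | h
    · have := Mfun_lip hEsub hEm h
      rw [abs_sub_comm, abs_sub_comm x y, abs_of_nonneg this.1,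
        abs_of_nonneg (sub_nonneg.2 h)]
      exact this.2
    · have := Mfun_lip hEsub hEm h
      rw [abs_of_nonneg this.1, abs_of_nonneg (sub_nonneg.2 h)]
      exact this.2
  exact this.continuous

def Tfun (E : Set ℝ) (u : ℝ) : ℝ :=
  sInf {x | x ∈ Icc (0:ℝ) 1 ∧ Mfun E x = clamp (mu E) u}

lemma Tfun_spec (u : ℝ) :
    Tfun E u ∈ Icc (0:ℝ) 1 ∧ Mfun E (Tfun E u) = clamp (mu E) u ∧
      ∀ x ∈ Icc (0:ℝ) 1, Mfun E x = clamp (mu E) u → Tfun E u ≤ x := by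
  set c := clamp (mu E) u with hc
  have hcmem : c ∈ Icc 0 (mu E) := clamp_mem ENNReal.toReal_nonneg u
  have hne : ∃ x ∈ Icc (0:ℝ) 1, Mfun E x = c := by
    have h01 : (0:ℝ) ≤ 1 := zero_le_one
    have := intermediate_value_Icc h01 ((Mfun_continuous hEsub hEm).continuousOn)
    have hmem : c ∈ Icc (Mfun E 0) (Mfun E 1) := by
      rw [Mfun_zero hEsub, Mfun_one hEsub]; exact hcmem
    obtain ⟨x, hx, hMx⟩ := this hmem
    exact ⟨x, hx, hMx⟩
  have hclosed : IsClosed {x | x ∈ Icc (0:ℝ) 1 ∧ Mfun E x = c} := by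
    exact (isClosed_Icc.inter ((isClosed_singleton (x := c)).preimage
      (Mfun_continuous hEsub hEm)))
  have hbdd : BddBelow {x | x ∈ Icc (0:ℝ) 1 ∧ Mfun E x = c} :=
    ⟨0, fun x hx => hx.1.1⟩
  have hne' : {x | x ∈ Icc (0:ℝ) 1 ∧ Mfun E x = c}.Nonempty := by
    obtain ⟨x, hx1, hx2⟩ := hne; exact ⟨x, hx1, hx2⟩
  have hmem := hclosed.csInf_mem hne' hbdd
  exact ⟨hmem.1, hmem.2, fun x hx hMx => csInf_le hbdd ⟨hx, hMx⟩⟩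

lemma Tfun_mono {u v : ℝ} (huv : u ≤ v) : Tfun E u ≤ Tfun E v := by
  obtain ⟨hv1, hv2, -⟩ := Tfun_spec hEsub hEm v
  obtain ⟨-, -, hu3⟩ := Tfun_spec hEsub hEm u
  have hcle : clamp (mu E) u ≤ clamp (mu E) v := clamp_mono huv
  have hivt := intermediate_value_Icc hv1.1 ((Mfun_continuous hEsub hEm).continuousOn)
  have hmem : clamp (mu E) u ∈ Icc (Mfun E 0) (Mfun E (Tfun E v)) := by
    rw [Mfun_zero hEsub, hv2]
    exact ⟨(clamp_mem ENNReal.toReal_nonneg u).1, hcle⟩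
  obtain ⟨x, hx, hMx⟩ := hivt hmem
  exact (hu3 x ⟨hx.1, hx.2.trans hv1.2⟩ hMx).trans hx.2

end T

def Phi (f : ℝ → ℝ) (E : Set ℝ) (u : ℝ) : ℝ := Vfun f E (Tfun E u)

section Phi

variable {E : Set ℝ} (hEsub : E ⊆ Icc 0 1) (hEm : MeasurableSet E)
  (hmeas : Measurable f) (hrange : ∀ x ∈ Icc (0:ℝ) 1, f x ∈ Icc (0:ℝ) 1)

include hEsub hEm hmeas hrange

lemma Phi_lip {u v : ℝ} (huv : u ≤ v) :
    0 ≤ Phi f E v - Phi f E u ∧ Phi f E v - Phi f E u ≤ v - u := by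
  have hT := Tfun_mono hEsub hEm huv
  have h1 := Vfun_between hEsub hEm hmeas hrange hT
  have h2 : Mfun E (Tfun E v) - Mfun E (Tfun E u) = clamp (mu E) v - clamp (mu E) u := by
    rw [(Tfun_spec hEsub hEm v).2.1, (Tfun_spec hEsub hEm u).2.1]
  refine ⟨h1.1, le_trans h1.2 ?_⟩
  rw [h2]
  exact clamp_lip huv

lemma Phi_of_nonpos {u : ℝ} (hu : u ≤ 0) : Phi f E u = 0 := by
  have hc : clamp (mu E) u = 0 :=
    max_eq_left ((min_le_left u (mu E)).trans hu)
  have hM : Mfun E (Tfun E u) = 0 := by rw [(Tfun_spec hEsub hEm u).2.1, hc]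
  have hvol : volume (E ∩ Iic (Tfun E u)) = 0 := by
    have := (ENNReal.toReal_eq_zero_iff _).1 hM
    rcases this with h | h
    · exact h
    · exact absurd h (vol_ne_top (inter_subset_left.trans hEsub))
  exact setIntegral_measure_zero _ hvol

lemma Phi_of_ge {u : ℝ} (hu : mu E ≤ u) : Phi f E u = vmass f E := by
  have hc : clamp (mu E) u = mu E := by
    rw [clamp, min_eq_right hu, max_eq_right (mu_nonneg E)]
  have hT := Tfun_spec hEsub hEm u
  have hM : Mfun E (Tfun E u) = mu E := by rw [hT.2.1, hc]
  have h1 := Vfun_between hEsub hEm hmeas hrange hT.1.2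
  rw [Mfun_one hEsub, hM, sub_self] at h1
  have hPhi : Phi f E u = Vfun f E (Tfun E u) := rfl
  have : Vfun f E 1 = Phi f E u := by rw [hPhi]; linarith [h1.1, h1.2]
  rw [← Vfun_one hEsub (f := f), this]

lemma Phi_continuous : Continuous (Phi f E) := by
  have : LipschitzWith 1 (Phi f E) := by
    refine LipschitzWith.of_dist_le_mul fun x y => ?_
    rw [Real.dist_eq, Real.dist_eq, NNReal.coe_one, one_mul]
    rcases le_total x y with h | h
    · have := Phi_lip hEsub hEm hmeas hrange h
      rw [abs_sub_comm, abs_sub_comm x y, abs_of_nonneg this.1,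
        abs_of_nonneg (sub_nonneg.2 h)]
      exact this.2
    · have := Phi_lip hEsub hEm hmeas hrange h
      rw [abs_of_nonneg this.1, abs_of_nonneg (sub_nonneg.2 h)]
      exact this.2
  exact this.continuous

end Phi

lemma exists_zero_of_integral_zero {g : ℝ → ℝ} (hg : Continuous g) {m : ℝ} (hm : 0 < m)
    (hint : (∫ u in (0:ℝ)..m, g u) = 0) : ∃ u ∈ Icc (0:ℝ) m, g u = 0 := by
  by_contra h
  push_neg at h
  by_cases hneg : ∃ u ∈ Icc (0:ℝ) m, g u < 0
  · obtain ⟨u₁, hu₁, hneg⟩ := hneg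
    by_cases hpos : ∃ u ∈ Icc (0:ℝ) m, 0 < g u
    · obtain ⟨u₂, hu₂, hpos⟩ := hpos
      have hivt := intermediate_value_uIcc (a := u₁) (b := u₂) (f := g) hg.continuousOn
      have h0 : (0:ℝ) ∈ uIcc (g u₁) (g u₂) := mem_uIcc.2 (Or.inl ⟨hneg.le, hpos.le⟩)
      obtain ⟨u, hu, hgu⟩ := hivt h0
      exact h u (uIcc_subset_Icc hu₁ hu₂ hu) hgu
    · push_neg at hpos
      have hlt : ∀ u ∈ Ioo (0:ℝ) m, 0 < -g u := by
        intro u hu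
        have h1 := hpos u ⟨hu.1.le, hu.2.le⟩
        have h2 := h u ⟨hu.1.le, hu.2.le⟩
        simp only [neg_pos]
        exact lt_of_le_of_ne h1 h2
      have := intervalIntegral.intervalIntegral_pos_of_pos_on
        ((hg.neg).intervalIntegrable 0 m) hlt hm
      simp only [Pi.neg_apply] at this
      rw [intervalIntegral.integral_neg, hint] at this
      simp at this
  · push_neg at hneg
    have hlt : ∀ u ∈ Ioo (0:ℝ) m, 0 < g u := by
      intro u hu
      have h1 := hneg u ⟨hu.1.le, hu.2.le⟩
      have h2 := h u ⟨hu.1.le, hu.2.le⟩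
      exact lt_of_le_of_ne h1 (Ne.symm h2)
    have := intervalIntegral.intervalIntegral_pos_of_pos_on
      (hg.intervalIntegrable 0 m) hlt hm
    rw [hint] at this
    simp at this

section HI

variable {E : Set ℝ} (hEsub : E ⊆ Icc 0 1) (hEm : MeasurableSet E)
  (hmeas : Measurable f) (hrange : ∀ x ∈ Icc (0:ℝ) 1, f x ∈ Icc (0:ℝ) 1)

include hEsub hEm hmeas hrange

lemma Hfun_integral {ℓ : ℝ} (hl0 : 0 ≤ ℓ) (hlm : ℓ ≤ mu E) :
    (∫ u in (0:ℝ)..(mu E), (Phi f E (u+ℓ) - Phi f E u + Phi f E (u+ℓ-mu E)))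
      = ℓ * vmass f E := by
  set m := mu E with hm
  have hΦc : Continuous (Phi f E) := Phi_continuous hEsub hEm hmeas hrange
  have hii : ∀ a b : ℝ, IntervalIntegrable (Phi f E) volume a b :=
    fun a b => hΦc.intervalIntegrable a b
  have c1 : (∫ u in (0:ℝ)..m, Phi f E (u+ℓ)) = ∫ u in ℓ..(m+ℓ), Phi f E u := by
    simpa using intervalIntegral.integral_comp_add_right (a := 0) (b := m)
      (f := Phi f E) ℓ
  have c2 : (∫ u in (0:ℝ)..m, Phi f E (u+ℓ-m)) = ∫ u in (ℓ-m)..ℓ, Phi f E u := by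
    calc (∫ u in (0:ℝ)..m, Phi f E (u+ℓ-m))
        = ∫ u in (0:ℝ)..m, Phi f E (u+(ℓ-m)) := by simp only [add_sub_assoc]
      _ = ∫ u in (0+(ℓ-m))..(m+(ℓ-m)), Phi f E u :=
          intervalIntegral.integral_comp_add_right (f := Phi f E) (ℓ - m)
      _ = ∫ u in (ℓ-m)..ℓ, Phi f E u := by norm_num
  have split1 : (∫ u in ℓ..(m+ℓ), Phi f E u)
      = (∫ u in ℓ..m, Phi f E u) + ∫ u in m..(m+ℓ), Phi f E u :=
    (intervalIntegral.integral_add_adjacent_intervals (hii ℓ m) (hii m (m+ℓ))).symm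
  have const1 : (∫ u in m..(m+ℓ), Phi f E u) = ℓ * vmass f E := by
    have heq : EqOn (Phi f E) (fun _ => vmass f E) (uIcc m (m+ℓ)) := by
      intro x hx
      rw [uIcc_of_le (le_add_of_nonneg_right hl0)] at hx
      exact Phi_of_ge hEsub hEm hmeas hrange hx.1
    rw [intervalIntegral.integral_congr heq, intervalIntegral.integral_const]
    simp [smul_eq_mul]
  have split2 : (∫ u in (ℓ-m)..ℓ, Phi f E u)
      = (∫ u in (ℓ-m)..(0:ℝ), Phi f E u) + ∫ u in (0:ℝ)..ℓ, Phi f E u :=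
    (intervalIntegral.integral_add_adjacent_intervals (hii (ℓ-m) 0) (hii 0 ℓ)).symm
  have const2 : (∫ u in (ℓ-m)..(0:ℝ), Phi f E u) = 0 := by
    have heq : EqOn (Phi f E) (fun _ => (0:ℝ)) (uIcc (ℓ-m) 0) := by
      intro x hx
      rw [uIcc_of_le (by linarith)] at hx
      exact Phi_of_nonpos hEsub hEm hmeas hrange hx.2
    rw [intervalIntegral.integral_congr heq]
    simp
  have split3 : (∫ u in (0:ℝ)..m, Phi f E u)
      = (∫ u in (0:ℝ)..ℓ, Phi f E u) + ∫ u in ℓ..m, Phi f E u :=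
    (intervalIntegral.integral_add_adjacent_intervals (hii 0 ℓ) (hii ℓ m)).symm
  have hiL : IntervalIntegrable (fun u => Phi f E (u+ℓ)) volume 0 m :=
    (hΦc.comp (continuous_id.add continuous_const)).intervalIntegrable 0 m
  have hiR : IntervalIntegrable (fun u => Phi f E (u+ℓ-m)) volume 0 m :=
    (hΦc.comp ((continuous_id.add continuous_const).sub continuous_const)).intervalIntegrable 0 m
  rw [intervalIntegral.integral_add (IntervalIntegrable.sub hiL (hii 0 m)) hiR,
    intervalIntegral.integral_sub hiL (hii 0 m), c1, c2]
  rw [split1, const1, split2, const2, split3]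
  ring

end HI

section WB

variable {E : Set ℝ} (hE : IsDistrict E)
  (hmeas : Measurable f) (hrange : ∀ x ∈ Icc (0:ℝ) 1, f x ∈ Icc (0:ℝ) 1)

include hE hmeas hrange

lemma window_bracket {x y : ℝ} (hxy : x ≤ y) :
    IsDistrict (E ∩ Icc x y) ∧ IsDistrict (E ∩ (Icc 0 x ∪ Icc y 1)) ∧
    volume ((E ∩ Icc x y) ∩ (E ∩ (Icc 0 x ∪ Icc y 1))) = 0 ∧
    mu (E ∩ Icc x y) = Mfun E y - Mfun E x ∧
    mu (E ∩ (Icc 0 x ∪ Icc y 1)) = mu E - (Mfun E y - Mfun E x) ∧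
    vmass f (E ∩ Icc x y) = Vfun f E y - Vfun f E x ∧
    vmass f (E ∩ (Icc 0 x ∪ Icc y 1)) = vmass f E - (Vfun f E y - Vfun f E x) := by
  obtain ⟨hEsub, -⟩ := id hE
  have hEm : MeasurableSet E := hE.measurableSet
  have d2eq : E ∩ (Icc 0 x ∪ Icc y 1) = (E ∩ Icc 0 x) ∪ (E ∩ Icc y 1) :=
    inter_union_distrib_left E _ _
  have eq1 : E ∩ Icc 0 x = E ∩ Iic x := by
    ext z
    exact ⟨fun hz => ⟨hz.1, hz.2.2⟩, fun hz => ⟨hz.1, (hEsub hz.1).1, hz.2⟩⟩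
  have eq2 : E ∩ Icc y 1 = E ∩ Ici y := by
    ext z
    exact ⟨fun hz => ⟨hz.1, hz.2.1⟩, fun hz => ⟨hz.1, hz.2, (hEsub hz.1).2⟩⟩
  -- districts
  refine ⟨hE.inter_Icc x y, by rw [d2eq]; exact (hE.inter_Icc 0 x).union (hE.inter_Icc y 1),
    ?_, ?_, ?_, ?_, ?_⟩
  · -- null intersection
    have hsub : (E ∩ Icc x y) ∩ (E ∩ (Icc 0 x ∪ Icc y 1)) ⊆ {x, y} := by
      rintro z ⟨⟨-, hz1, hz2⟩, -, hz3 | hz3⟩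
      · exact Or.inl (le_antisymm hz3.2 hz1)
      · exact Or.inr (le_antisymm hz2 hz3.1)
    refine measure_mono_null hsub ?_
    exact (Set.toFinite ({x, y} : Set ℝ)).measure_zero volume
  · -- mu of window
    have hvol : volume (E ∩ Icc x y) = volume (E ∩ Ioc x y) := by
      refine le_antisymm ?_ (measure_mono (inter_subset_inter_right E Ioc_subset_Icc_self))
      calc volume (E ∩ Icc x y) ≤ volume ((E ∩ Ioc x y) ∪ {x}) := by
            refine measure_mono fun z hz => ?_
            rcases eq_or_lt_of_le hz.2.1 with h | h
            · exact Or.inr (by simp [← h])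
            · exact Or.inl ⟨hz.1, h, hz.2.2⟩
        _ ≤ volume (E ∩ Ioc x y) + volume ({x} : Set ℝ) := measure_union_le _ _
        _ = volume (E ∩ Ioc x y) := by simp
    rw [Mfun_diff hEsub hEm hxy, mu, mu, hvol]
  · -- mu of bracket
    have hIciIoi : volume (E ∩ Ici y) = volume (E ∩ Ioi y) := by
      refine le_antisymm ?_ (measure_mono (inter_subset_inter_right E Ioi_subset_Ici_self))
      calc volume (E ∩ Ici y) ≤ volume ((E ∩ Ioi y) ∪ {y}) := by
            refine measure_mono fun z hz => ?_
            rcases eq_or_lt_of_le (mem_Ici.1 hz.2) with h | h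
            · exact Or.inr (by simp [h])
            · exact Or.inl ⟨hz.1, h⟩
        _ ≤ volume (E ∩ Ioi y) + volume ({y} : Set ℝ) := measure_union_le _ _
        _ = volume (E ∩ Ioi y) := by simp
    have hsplit : volume E = volume (E ∩ Iic y) + volume (E ∩ Ioi y) := by
      rw [← measure_union ((Iic_disjoint_Ioi le_rfl).mono inter_subset_right
        inter_subset_right) (hEm.inter measurableSet_Ioi),
        ← inter_union_distrib_left, Iic_union_Ioi, inter_univ]
    have hB : volume (E ∩ (Icc 0 x ∪ Icc y 1))
        = volume (E ∩ Iic x) + volume (E ∩ Ici y) := by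
      rw [d2eq, eq1, eq2]
      refine measure_union₀ (hEm.inter measurableSet_Ici).nullMeasurableSet ?_
      refine measure_mono_null (fun z hz => ?_) (measure_singleton x)
      have h1 : z ≤ x := hz.1.2
      have h2 : y ≤ z := hz.2.2
      exact le_antisymm h1 (hxy.trans h2)
    have fin1 : volume (E ∩ Iic x) ≠ ⊤ := vol_ne_top (inter_subset_left.trans hEsub)
    have fin2 : volume (E ∩ Ici y) ≠ ⊤ := vol_ne_top (inter_subset_left.trans hEsub)
    have fin3 : volume (E ∩ Iic y) ≠ ⊤ := vol_ne_top (inter_subset_left.trans hEsub)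
    have fin4 : volume (E ∩ Ioi y) ≠ ⊤ := vol_ne_top (inter_subset_left.trans hEsub)
    have e1 : (volume (E ∩ (Icc 0 x ∪ Icc y 1))).toReal
        = (volume (E ∩ Iic x)).toReal + (volume (E ∩ Ioi y)).toReal := by
      rw [hB, ENNReal.toReal_add fin1 fin2, hIciIoi]
    have e2 : (volume E).toReal
        = (volume (E ∩ Iic y)).toReal + (volume (E ∩ Ioi y)).toReal := by
      rw [hsplit, ENNReal.toReal_add fin3 fin4]
    simp only [mu, Mfun]
    linarith [e1, e2]
  · -- vmass of window
    have haeeq : (E ∩ Icc x y : Set ℝ) =ᵐ[volume] (E ∩ Ioc x y : Set ℝ) := by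
      rw [MeasureTheory.ae_eq_set]
      constructor
      · refine measure_mono_null (fun z hz => ?_) (measure_singleton x)
        obtain ⟨⟨hzE, hz1, hz2⟩, hz3⟩ := hz
        by_contra hne
        exact hz3 ⟨hzE, lt_of_le_of_ne hz1 (Ne.symm hne), hz2⟩
      · refine measure_mono_null (fun z hz => ?_) (measure_empty (μ := volume))
        exact absurd ⟨hz.1.1, Ioc_subset_Icc_self hz.1.2⟩ hz.2
    rw [vmass, setIntegral_congr_set haeeq, Vfun_diff hEsub hEm hmeas hrange hxy, vmass]
  · -- vmass of bracket
    have haeeq : (E ∩ (Icc 0 x ∪ Icc y 1) : Set ℝ)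
        =ᵐ[volume] ((E ∩ Iic x) ∪ (E ∩ Ioi y) : Set ℝ) := by
      rw [MeasureTheory.ae_eq_set]
      constructor
      · refine measure_mono_null (fun z hz => ?_) (measure_singleton y)
        obtain ⟨⟨hzE, hzcup⟩, hz2⟩ := hz
        rcases hzcup with h | h
        · exact absurd (Or.inl ⟨hzE, h.2⟩) hz2
        · by_contra hne
          exact hz2 (Or.inr ⟨hzE, lt_of_le_of_ne h.1 (Ne.symm hne)⟩)
      · refine measure_mono_null (fun z hz => ?_) (measure_empty (μ := volume))
        obtain ⟨hzU, hz2⟩ := hz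
        rcases hzU with h | h
        · exact absurd ⟨h.1, Or.inl ⟨(hEsub h.1).1, h.2⟩⟩ hz2
        · exact absurd ⟨h.1, Or.inr ⟨h.2.le, (hEsub h.1).2⟩⟩ hz2
    have hdisj : Disjoint (E ∩ Iic x) (E ∩ Ioi y) :=
      (Iic_disjoint_Ioi hxy).mono inter_subset_right inter_subset_right
    have hint1 := integrableOn_of_range (f := f) hmeas hrange
      (inter_subset_left.trans hEsub) (hEm.inter (measurableSet_Iic (a := x)))
    have hint2 := integrableOn_of_range (f := f) hmeas hrange
      (inter_subset_left.trans hEsub) (hEm.inter (measurableSet_Ioi (a := y)))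
    have hU := setIntegral_union (μ := volume) (f := f) hdisj
      (hEm.inter measurableSet_Ioi) hint1 hint2
    have hEsplit : vmass f E = Vfun f E y + ∫ z in E ∩ Ioi y, f z := by
      have hu : (E ∩ Iic y) ∪ (E ∩ Ioi y) = E := by
        rw [← inter_union_distrib_left, Iic_union_Ioi, inter_univ]
      have hd : Disjoint (E ∩ Iic y) (E ∩ Ioi y) :=
        (Iic_disjoint_Ioi le_rfl).mono inter_subset_right inter_subset_right
      have := setIntegral_union (μ := volume) (f := f) hd
        (hEm.inter measurableSet_Ioi)
        (integrableOn_of_range hmeas hrange (inter_subset_left.trans hEsub)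
          (hEm.inter measurableSet_Iic))
        hint2
      rw [hu] at this
      rw [vmass, this, Vfun, vmass]
    rw [vmass, setIntegral_congr_set haeeq, hU, hEsplit]
    simp only [Vfun, vmass]
    ring

end WB

lemma cut_one (hmeas : Measurable f)
    (hrange : ∀ x ∈ Icc (0:ℝ) 1, f x ∈ Icc (0:ℝ) 1)
    {E : Set ℝ} (hE : IsDistrict E) (hEpos : 0 < mu E)
    {ℓ : ℝ} (hl0 : 0 ≤ ℓ) (hlm : ℓ ≤ mu E) :
    ∃ S E', IsDistrict S ∧ IsDistrict E' ∧ S ⊆ E ∧ E' ⊆ E ∧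
      volume (S ∩ E') = 0 ∧ mu S = ℓ ∧ mu E' = mu E - ℓ ∧
      vmass f S = ℓ / mu E * vmass f E ∧ vmass f E' = vmass f E - vmass f S := by
  obtain ⟨hEsub, -⟩ := id hE
  have hEm := hE.measurableSet
  have hΦc : Continuous (Phi f E) := Phi_continuous hEsub hEm hmeas hrange
  set m := mu E with hmdef
  set c := ℓ / m * vmass f E with hcdef
  have hHc : Continuous (fun u => Phi f E (u+ℓ) - Phi f E u + Phi f E (u+ℓ-m)) :=
    ((hΦc.comp (continuous_id.add continuous_const)).sub hΦc).add
      (hΦc.comp ((continuous_id.add continuous_const).sub continuous_const))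
  have hHint := Hfun_integral hEsub hEm hmeas hrange hl0 hlm
  have hgc : Continuous (fun u => Phi f E (u+ℓ) - Phi f E u + Phi f E (u+ℓ-m) - c) :=
    hHc.sub continuous_const
  have hgint : (∫ u in (0:ℝ)..m,
      (Phi f E (u+ℓ) - Phi f E u + Phi f E (u+ℓ-m) - c)) = 0 := by
    rw [intervalIntegral.integral_sub (hHc.intervalIntegrable 0 m)
      (intervalIntegrable_const), hHint, intervalIntegral.integral_const]
    simp only [smul_eq_mul, sub_zero, hcdef]
    field_simp
    ring
  obtain ⟨u₀, hu₀, hgu⟩ := exists_zero_of_integral_zero hgc hEpos hgint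
  have hHu : Phi f E (u₀+ℓ) - Phi f E u₀ + Phi f E (u₀+ℓ-m) = c := by
    have := hgu
    linarith
  have hMT : ∀ u, Mfun E (Tfun E u) = clamp m u := fun u => (Tfun_spec hEsub hEm u).2.1
  have hPhidef : ∀ u, Phi f E u = Vfun f E (Tfun E u) := fun u => rfl
  by_cases hcase : u₀ + ℓ ≤ m
  · have hab : Tfun E u₀ ≤ Tfun E (u₀+ℓ) := Tfun_mono hEsub hEm (by linarith)
    obtain ⟨d1, d2, hnull, hmuW, hmuB, hvW, hvB⟩ := window_bracket hE hmeas hrange hab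
    have hMa : Mfun E (Tfun E u₀) = u₀ := by rw [hMT]; exact clamp_of_mem hu₀
    have hMb : Mfun E (Tfun E (u₀+ℓ)) = u₀ + ℓ := by
      rw [hMT]; exact clamp_of_mem ⟨by linarith [hu₀.1], hcase⟩
    have hPhi0 : Phi f E (u₀+ℓ-m) = 0 :=
      Phi_of_nonpos hEsub hEm hmeas hrange (by linarith)
    have hV : Vfun f E (Tfun E (u₀+ℓ)) - Vfun f E (Tfun E u₀) = c := by
      rw [← hPhidef, ← hPhidef]; linarith
    refine ⟨E ∩ Icc (Tfun E u₀) (Tfun E (u₀+ℓ)),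
      E ∩ (Icc 0 (Tfun E u₀) ∪ Icc (Tfun E (u₀+ℓ)) 1),
      d1, d2, inter_subset_left, inter_subset_left, hnull, ?_, ?_, ?_, ?_⟩
    · rw [hmuW, hMa, hMb]; ring
    · rw [hmuB, hMa, hMb]; ring
    · rw [hvW, hV]
    · rw [hvB, ← hvW]
  · push_neg at hcase
    have hxy : Tfun E (u₀+ℓ-m) ≤ Tfun E u₀ := Tfun_mono hEsub hEm (by linarith)
    obtain ⟨d1, d2, hnull, hmuW, hmuB, hvW, hvB⟩ := window_bracket hE hmeas hrange hxy
    have hMx : Mfun E (Tfun E (u₀+ℓ-m)) = u₀ + ℓ - m := by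
      rw [hMT]; exact clamp_of_mem ⟨by linarith, by linarith [hu₀.2]⟩
    have hMy : Mfun E (Tfun E u₀) = u₀ := by rw [hMT]; exact clamp_of_mem hu₀
    have hPhiEnd : Phi f E (u₀+ℓ) = vmass f E :=
      Phi_of_ge hEsub hEm hmeas hrange (by linarith)
    have hV : Vfun f E (Tfun E u₀) - Vfun f E (Tfun E (u₀+ℓ-m)) = vmass f E - c := by
      rw [← hPhidef, ← hPhidef]; linarith
    refine ⟨E ∩ (Icc 0 (Tfun E (u₀+ℓ-m)) ∪ Icc (Tfun E u₀) 1),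
      E ∩ Icc (Tfun E (u₀+ℓ-m)) (Tfun E u₀),
      d2, d1, inter_subset_left, inter_subset_left, ?_, ?_, ?_, ?_, ?_⟩
    · rw [inter_comm]; exact hnull
    · rw [hmuB, hMx, hMy]; ring
    · rw [hmuW, hMx, hMy]; ring
    · rw [hvB, hV]; ring
    · rw [hvW, hvB, hV]; ring

lemma cut_family (hmeas : Measurable f)
    (hrange : ∀ x ∈ Icc (0:ℝ) 1, f x ∈ Icc (0:ℝ) 1)
    {D : Set ℝ} (hD : IsDistrict D) (hDpos : 0 < mu D)
    {s : ℝ} (hs : 0 < s) :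
    ∀ j : ℕ, (j : ℝ) * s ≤ 1 →
      ∃ (Ds : Fin j → Set ℝ) (R : Set ℝ),
        IsDistrict R ∧ R ⊆ D ∧ mu R = (1 - j * s) * mu D ∧
        vmass f R = (1 - j * s) * vmass f D ∧
        (∀ k, IsDistrict (Ds k)) ∧ (∀ k, Ds k ⊆ D) ∧
        (∀ k, volume (Ds k ∩ R) = 0) ∧
        (∀ k₁ k₂, k₁ ≠ k₂ → volume (Ds k₁ ∩ Ds k₂) = 0) ∧
        (∀ k, mu (Ds k) = s * mu D) ∧ (∀ k, vmass f (Ds k) = s * vmass f D) := by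
  intro j
  induction j with
  | zero =>
    intro _
    exact ⟨fun k => k.elim0, D, hD, subset_rfl, by norm_num, by norm_num,
      fun k => k.elim0, fun k => k.elim0, fun k => k.elim0, fun k₁ => k₁.elim0,
      fun k => k.elim0, fun k => k.elim0⟩
  | succ j ih =>
    intro hj1
    have hj1' : ((j:ℝ) + 1) * s ≤ 1 := by push_cast at hj1; linarith
    have hjs : (j:ℝ) * s ≤ 1 := by nlinarith
    obtain ⟨Ds, R, hRdist, hRsub, hRmu, hRv, hd, hsub, hnullR, hpair, hmu, hv⟩ := ih hjs
    have hposcoef : 0 < 1 - (j:ℝ) * s := by nlinarith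
    have hRpos : 0 < mu R := by rw [hRmu]; positivity
    have hl0 : 0 ≤ s * mu D := by positivity
    have hlm : s * mu D ≤ mu R := by rw [hRmu]; nlinarith
    obtain ⟨S, R', hSdist, hR'dist, hSsub, hR'sub, hnull, hSmu, hR'mu, hSv, hR'v⟩ :=
      cut_one hmeas hrange hRdist hRpos hl0 hlm
    have hmuDne : mu D ≠ 0 := ne_of_gt hDpos
    have hSvval : vmass f S = s * vmass f D := by
      rw [hSv, hRmu, hRv]
      field_simp
      have hx : (1 - s * (j:ℝ)) ≠ 0 := by intro h; linarith [hposcoef]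
      field_simp
    have hSD : ∀ i : Fin j, volume (S ∩ Ds i) = 0 := fun i => by
      rw [inter_comm]
      exact measure_mono_null (inter_subset_inter Subset.rfl hSsub) (hnullR i)
    refine ⟨Fin.snoc Ds S, R', hR'dist, hR'sub.trans hRsub, ?_, ?_, ?_, ?_, ?_, ?_, ?_, ?_⟩
    · rw [hR'mu, hRmu]; push_cast; ring
    · rw [hR'v, hSvval, hRv]; push_cast; ring
    · intro k
      rcases Fin.eq_castSucc_or_eq_last k with ⟨i, rfl⟩ | rfl
      · simpa only [Fin.snoc_castSucc] using hd i
      · simpa only [Fin.snoc_last] using hSdist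
    · intro k
      rcases Fin.eq_castSucc_or_eq_last k with ⟨i, rfl⟩ | rfl
      · simpa only [Fin.snoc_castSucc] using hsub i
      · simpa only [Fin.snoc_last] using hSsub.trans hRsub
    · intro k
      rcases Fin.eq_castSucc_or_eq_last k with ⟨i, rfl⟩ | rfl
      · simp only [Fin.snoc_castSucc]
        exact measure_mono_null (inter_subset_inter Subset.rfl hR'sub) (hnullR i)
      · simpa only [Fin.snoc_last] using hnull
    · intro k₁ k₂ hne
      rcases Fin.eq_castSucc_or_eq_last k₁ with ⟨i₁, rfl⟩ | rfl <;>
        rcases Fin.eq_castSucc_or_eq_last k₂ with ⟨i₂, rfl⟩ | rfl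
      · simp only [Fin.snoc_castSucc]
        exact hpair i₁ i₂ (fun h => hne (by rw [h]))
      · simp only [Fin.snoc_castSucc, Fin.snoc_last]
        rw [inter_comm]
        exact hSD i₁
      · simp only [Fin.snoc_castSucc, Fin.snoc_last]
        exact hSD i₂
      · exact absurd rfl hne
    · intro k
      rcases Fin.eq_castSucc_or_eq_last k with ⟨i, rfl⟩ | rfl
      · simpa only [Fin.snoc_castSucc] using hmu i
      · simpa only [Fin.snoc_last] using hSmu
    · intro k
      rcases Fin.eq_castSucc_or_eq_last k with ⟨i, rfl⟩ | rfl
      · simpa only [Fin.snoc_castSucc] using hv i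
      · simpa only [Fin.snoc_last] using hSvval


/-- Iterated proportional cutting: from any district one can cut `⌊1/s⌋`
pairwise almost-disjoint subdistricts, each of measure `s·μ(D)` and voter mass
`s·v(D)`. -/
theorem district_proportional_cut_iterated (f : ℝ → ℝ) (hmeas : Measurable f)
    (hrange : ∀ x ∈ Icc (0:ℝ) 1, f x ∈ Icc (0:ℝ) 1)
    (D : Set ℝ) (hD : IsDistrict D) (s : ℝ) (hs : 0 < s) :
    ∃ Ds : Fin ⌊1 / s⌋₊ → Set ℝ,
      (∀ k, IsDistrict (Ds k)) ∧
      (∀ k, Ds k ⊆ D) ∧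
      (∀ k₁ k₂, k₁ ≠ k₂ → mu (Ds k₁ ∩ Ds k₂) = 0) ∧
      (∀ k, mu (Ds k) = s * mu D) ∧
      (∀ k, vmass f (Ds k) = s * vmass f D) := by
  by_cases hD0 : mu D = 0
  · have hvol : volume D = 0 := by
      rcases (ENNReal.toReal_eq_zero_iff _).1 hD0 with h | h
      · exact h
      · exact absurd h (vol_ne_top hD.1)
    have hv0 : vmass f D = 0 := setIntegral_measure_zero _ hvol
    exact ⟨fun _ => ∅, fun _ => isDistrict_empty, fun _ => empty_subset _,
      fun _ _ _ => by simp [mu], fun _ => by rw [hD0, mul_zero]; simp [mu],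
      fun _ => by rw [hv0, mul_zero]; simp [vmass]⟩
  · have hDpos : 0 < mu D := (mu_nonneg D).lt_of_ne (Ne.symm hD0)
    have hns : ((⌊1/s⌋₊ : ℕ) : ℝ) * s ≤ 1 := by
      have h1 : (0:ℝ) ≤ 1/s := by positivity
      have h2 := Nat.floor_le h1
      calc ((⌊1/s⌋₊ : ℕ) : ℝ) * s ≤ (1/s) * s := by nlinarith
        _ = 1 := by field_simp
    obtain ⟨Ds, R, -, -, -, -, hdist, hsub, -, hpair, hmu, hv⟩ :=
      cut_family hmeas hrange hD hDpos hs _ hns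
    refine ⟨Ds, hdist, hsub, fun k₁ k₂ hne => ?_, hmu, hv⟩
    simp [mu, hpair k₁ k₂ hne]
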